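/- arXiv:1512.05507 — 4 statements merged into one kernel-verified Lean document; each statement's English description precedes it below -/
import Mathlib

section
/- Let Λ, Y ∈ S^m be real symmetric m×m matrices such that Y∘Λ = 0 and Y ∈ Φ(Λ), i.e., ⟨W∘W, Λ⟩ > 0 for every nonzero W ∈ S^m with Y∘W = 0. Then Λ is positive semidefinite. -/
/-!
Since `Y ∘ Λ = 0`, `Λ` anticommutes with `Y` and therefore commutes with `Y²`. If `Λ` is not
positive semidefinite, this gives a common eigenvector `u` with `Λ u = a u`, `a < 0`, and
`Y² u = b u`. Then `v = Y u` satisfies `Λ v = -a v`, so `u ⊥ v` and `|v|² = b |u|²`.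
The symmetric matrix `W = u uᵀ - b⁻¹ v vᵀ` is nonzero, satisfies `Y ∘ W = 0`, and
`⟨W ∘ W, Λ⟩ = a (|u|⁴ - b⁻² |v|⁴)`, which is `0` if `v ≠ 0` and `a |u|⁴ < 0` if `v = 0`;
either way this contradicts `Y ∈ Φ(Λ)`.
-/

open Matrix

noncomputable section

def jmul {m : ℕ} (A B : Matrix (Fin m) (Fin m) ℝ) : Matrix (Fin m) (Fin m) ℝ :=
  (1 / 2 : ℝ) • (A * B + B * A)

def minner {m : ℕ} (A B : Matrix (Fin m) (Fin m) ℝ) : ℝ :=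
  (A * B).trace

def memPhi {m : ℕ} (Λ Y : Matrix (Fin m) (Fin m) ℝ) : Prop :=
  ∀ W : Matrix (Fin m) (Fin m) ℝ, W.IsSymm → W ≠ 0 → jmul Y W = 0 →
    0 < minner (jmul W W) Λ

def pderivG {n m : ℕ} (G : (Fin n → ℝ) → Matrix (Fin m) (Fin m) ℝ)
    (x : Fin n → ℝ) (k : Fin n) : Matrix (Fin m) (Fin m) ℝ :=
  Matrix.of fun i j => fderiv ℝ (fun y => G y i j) x (Pi.single k 1)

def dirDerivG {n m : ℕ} (G : (Fin n → ℝ) → Matrix (Fin m) (Fin m) ℝ)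
    (x v : Fin n → ℝ) : Matrix (Fin m) (Fin m) ℝ :=
  ∑ k, v k • pderivG G x k

def adjDG {n m : ℕ} (G : (Fin n → ℝ) → Matrix (Fin m) (Fin m) ℝ)
    (x : Fin n → ℝ) (W : Matrix (Fin m) (Fin m) ℝ) : Fin n → ℝ :=
  fun k => minner (pderivG G x k) W

def gradf {n : ℕ} (f : (Fin n → ℝ) → ℝ) (x : Fin n → ℝ) : Fin n → ℝ :=
  fun k => fderiv ℝ f x (Pi.single k 1)

def KKT1 {n m : ℕ} (f : (Fin n → ℝ) → ℝ) (G : (Fin n → ℝ) → Matrix (Fin m) (Fin m) ℝ)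
    (x : Fin n → ℝ) (Λ : Matrix (Fin m) (Fin m) ℝ) : Prop :=
  gradf f x = adjDG G x Λ ∧ Λ.PosSemidef ∧ (G x).PosSemidef ∧ jmul Λ (G x) = 0

def KKT2 {n m : ℕ} (f : (Fin n → ℝ) → ℝ) (G : (Fin n → ℝ) → Matrix (Fin m) (Fin m) ℝ)
    (x : Fin n → ℝ) (Y Λ : Matrix (Fin m) (Fin m) ℝ) : Prop :=
  gradf f x = adjDG G x Λ ∧ jmul Λ Y = 0 ∧ G x = jmul Y Y

def hessQ {n m : ℕ} (f : (Fin n → ℝ) → ℝ) (G : (Fin n → ℝ) → Matrix (Fin m) (Fin m) ℝ)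
    (Λ : Matrix (Fin m) (Fin m) ℝ) (x v : Fin n → ℝ) : ℝ :=
  iteratedFDeriv ℝ 2 (fun y => f y - minner (G y) Λ) x ![v, v]

def SOSCNLP {n m : ℕ} (f : (Fin n → ℝ) → ℝ) (G : (Fin n → ℝ) → Matrix (Fin m) (Fin m) ℝ)
    (x : Fin n → ℝ) (Y Λ : Matrix (Fin m) (Fin m) ℝ) : Prop :=
  ∀ (v : Fin n → ℝ) (W : Matrix (Fin m) (Fin m) ℝ), W.IsSymm →
    ¬(v = 0 ∧ W = 0) → dirDerivG G x v = (2 : ℝ) • jmul Y W →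
    0 < hessQ f G Λ x v + 2 * minner (jmul W W) Λ

def SONCNLP {n m : ℕ} (f : (Fin n → ℝ) → ℝ) (G : (Fin n → ℝ) → Matrix (Fin m) (Fin m) ℝ)
    (x : Fin n → ℝ) (Y Λ : Matrix (Fin m) (Fin m) ℝ) : Prop :=
  ∀ (v : Fin n → ℝ) (W : Matrix (Fin m) (Fin m) ℝ), W.IsSymm →
    dirDerivG G x v = (2 : ℝ) • jmul Y W →
    0 ≤ hessQ f G Λ x v + 2 * minner (jmul W W) Λ

def LICQ {n m : ℕ} (G : (Fin n → ℝ) → Matrix (Fin m) (Fin m) ℝ)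
    (x : Fin n → ℝ) (Y : Matrix (Fin m) (Fin m) ℝ) : Prop :=
  ∀ W : Matrix (Fin m) (Fin m) ℝ, W.IsSymm → jmul Y W = 0 → adjDG G x W = 0 → W = 0

def Nondeg {n m : ℕ} (G : (Fin n → ℝ) → Matrix (Fin m) (Fin m) ℝ)
    (x : Fin n → ℝ) : Prop :=
  ∀ W : Matrix (Fin m) (Fin m) ℝ, W.IsSymm → G x * W = 0 → adjDG G x W = 0 → W = 0

def CritCone {n m : ℕ} (f : (Fin n → ℝ) → ℝ) (G : (Fin n → ℝ) → Matrix (Fin m) (Fin m) ℝ)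
    (x : Fin n → ℝ) : Set (Fin n → ℝ) :=
  {d | (∀ u : Fin m → ℝ, G x *ᵥ u = 0 → 0 ≤ u ⬝ᵥ (dirDerivG G x d *ᵥ u)) ∧
    gradf f x ⬝ᵥ d = 0}

def IsMPInv {m : ℕ} (A P : Matrix (Fin m) (Fin m) ℝ) : Prop :=
  A * P * A = A ∧ P * A * P = P ∧ (A * P)ᵀ = A * P ∧ (P * A)ᵀ = P * A

def Hmat {n m : ℕ} (G : (Fin n → ℝ) → Matrix (Fin m) (Fin m) ℝ)
    (x : Fin n → ℝ) (Λ P : Matrix (Fin m) (Fin m) ℝ) : Matrix (Fin n) (Fin n) ℝ :=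
  Matrix.of fun i j => 2 * (pderivG G x i * P * pderivG G x j * Λ).trace

open scoped ComplexOrder

namespace Matrix

variable {𝕜 n : Type*} [RCLike 𝕜] [Fintype n] [DecidableEq n]

theorem IsHermitian.exists_common_eigenvector {A B : Matrix n n 𝕜} (hB : B.IsHermitian)
    (hAB : Commute A B) {a : 𝕜} {x : n → 𝕜} (hx : x ≠ 0) (hAx : A *ᵥ x = a • x) :
    ∃ (b : 𝕜) (u : n → 𝕜), u ≠ 0 ∧ A *ᵥ u = a • u ∧ B *ᵥ u = b • u := by
  have hcomm : Commute (toEuclideanLin A) (toEuclideanLin B) := by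
    refine LinearMap.ext fun y => ?_
    simp only [Module.End.mul_apply, toLpLin_apply, mulVec_mulVec, hAB.eq]
  have hne : Module.End.eigenspace (toEuclideanLin A) a ≠ ⊥ := by
    refine (Submodule.ne_bot_iff _).mpr ⟨WithLp.toLp 2 x, ?_, by simpa using hx⟩
    rw [Module.End.mem_eigenspace_iff]
    simp [hAx]
  rw [← LinearMap.IsSymmetric.iSup_eigenspace_inf_eigenspace_of_commute
    (isSymmetric_toEuclideanLin_iff.mpr hB) hcomm, Ne, iSup_eq_bot, not_forall] at hne
  obtain ⟨b, hb⟩ := hne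
  obtain ⟨u, hu, hu0⟩ := (Submodule.ne_bot_iff _).mp hb
  obtain ⟨hAu, hBu⟩ := Submodule.mem_inf.mp hu
  rw [Module.End.mem_eigenspace_iff] at hAu hBu
  exact ⟨b, WithLp.ofLp u, by simpa using hu0, by simpa using congrArg WithLp.ofLp hAu,
    by simpa using congrArg WithLp.ofLp hBu⟩

theorem IsHermitian.exists_neg_eigenvector_of_not_posSemidef {A : Matrix n n 𝕜}
    (hA : A.IsHermitian) (h : ¬ A.PosSemidef) :
    ∃ (a : ℝ) (x : n → 𝕜), a < 0 ∧ x ≠ 0 ∧ A *ᵥ x = a • x := by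
  obtain ⟨i, hi⟩ : ∃ i, hA.eigenvalues i < 0 := by
    simpa [hA.posSemidef_iff_eigenvalues_nonneg, Pi.le_def] using h
  refine ⟨_, WithLp.ofLp (hA.eigenvectorBasis i), hi, fun h0 => ?_, hA.mulVec_eigenvectorBasis i⟩
  exact hA.eigenvectorBasis.orthonormal.ne_zero i (by simpa using congrArg (WithLp.toLp 2) h0)

end Matrix

theorem Commute.mul_self_of_mul_eq_neg_mul {R : Type*} [Ring R] {a b : R}
    (h : b * a = -(a * b)) : Commute b (a * a) := by
  calc b * (a * a) = b * a * a := (mul_assoc _ _ _).symm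
    _ = a * (a * b) := by rw [h, neg_mul, mul_assoc, h, mul_neg, neg_neg]
    _ = a * a * b := (mul_assoc _ _ _).symm

lemma Matrix.IsSymm.dotProduct_mulVec_comm {n R : Type*} [Fintype n] [CommSemiring R]
    {M : Matrix n n R} (hM : M.IsSymm) (x y : n → R) : x ⬝ᵥ (M *ᵥ y) = (M *ᵥ x) ⬝ᵥ y := by
  rw [dotProduct_mulVec, ← mulVec_transpose, hM.eq]

lemma Matrix.isSymm_vecMulVec_self {n R : Type*} [CommMagma R] (x : n → R) :
    (vecMulVec x x).IsSymm :=
  transpose_vecMulVec x x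

lemma Matrix.IsSymm.dotProduct_eq_zero_of_mulVec_eq_smul {n K : Type*} [Fintype n] [Field K]
    {M : Matrix n n K} (hM : M.IsSymm) {x y : n → K} {α β : K} (hx : M *ᵥ x = α • x)
    (hy : M *ᵥ y = β • y) (hαβ : α ≠ β) : x ⬝ᵥ y = 0 := by
  have h : α * (x ⬝ᵥ y) = β * (x ⬝ᵥ y) := by
    rw [← smul_eq_mul, ← smul_dotProduct, ← hx, ← hM.dotProduct_mulVec_comm, hy,
      dotProduct_smul, smul_eq_mul]
  exact (mul_eq_mul_right_iff.mp h).resolve_left hαβ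

section JordanProduct

variable {m : ℕ}

lemma mul_eq_neg_mul_of_jmul_eq_zero {A B : Matrix (Fin m) (Fin m) ℝ} (h : jmul A B = 0) :
    B * A = -(A * B) := by
  rw [jmul, smul_eq_zero, or_iff_right (by norm_num)] at h
  exact eq_neg_of_add_eq_zero_right h

lemma jmul_self (W : Matrix (Fin m) (Fin m) ℝ) : jmul W W = W * W := by
  rw [jmul, ← two_smul ℝ (W * W), smul_smul]
  norm_num

end JordanProduct

section Witness

variable {m : ℕ}

-- For `v = Y u` and `Y² u = b u`: if `b = 0` then `v = 0`, so this is `u uᵀ` whatever `0⁻¹` is.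
def phiWitness (u v : Fin m → ℝ) (b : ℝ) : Matrix (Fin m) (Fin m) ℝ :=
  vecMulVec u u - b⁻¹ • vecMulVec v v

variable {Λ Y : Matrix (Fin m) (Fin m) ℝ} {u v : Fin m → ℝ} {a b : ℝ}

lemma phiWitness_isSymm (u v : Fin m → ℝ) (b : ℝ) : (phiWitness u v b).IsSymm :=
  (isSymm_vecMulVec_self u).sub ((isSymm_vecMulVec_self v).smul _)

lemma phiWitness_ne_zero (hu : u ≠ 0) (huv : u ⬝ᵥ v = 0) : phiWitness u v b ≠ 0 := by
  have hWu : phiWitness u v b *ᵥ u = (u ⬝ᵥ u) • u := by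
    simp [phiWitness, sub_mulVec, smul_mulVec, vecMulVec_mulVec, dotProduct_comm v u, huv]
  intro hW
  rw [hW, zero_mulVec, eq_comm, smul_eq_zero, dotProduct_self_eq_zero, or_self] at hWu
  exact hu hWu

lemma mulVec_eq_neg_smul_of_anticomm (hanti : Λ * Y = -(Y * Λ)) (hΛu : Λ *ᵥ u = a • u)
    (hv : Y *ᵥ u = v) : Λ *ᵥ v = -a • v := by
  rw [← hv, mulVec_mulVec, hanti, neg_mulVec, ← mulVec_mulVec, hΛu, mulVec_smul, neg_smul]

lemma dotProduct_self_eq_mul (hY : Y.IsSymm) (hv : Y *ᵥ u = v) (hYv : Y *ᵥ v = b • u) :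
    v ⬝ᵥ v = b * (u ⬝ᵥ u) := by
  rw [← hv, ← hY.dotProduct_mulVec_comm, hv, hYv, dotProduct_smul, smul_eq_mul]

lemma jmul_phiWitness_eq_zero (hY : Y.IsSymm) (hv : Y *ᵥ u = v) (hYv : Y *ᵥ v = b • u) :
    jmul Y (phiWitness u v b) = 0 := by
  have hYW : Y * phiWitness u v b = vecMulVec v u - (b⁻¹ * b) • vecMulVec u v := by
    rw [phiWitness, mul_sub, Matrix.mul_smul, mul_vecMulVec, mul_vecMulVec, hv, hYv,
      smul_vecMulVec, smul_smul]
  have hWY : phiWitness u v b * Y = vecMulVec u v - (b⁻¹ * b) • vecMulVec v u := by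
    rw [phiWitness, sub_mul, Matrix.smul_mul, vecMulVec_mul, vecMulVec_mul, ← mulVec_transpose,
      ← mulVec_transpose, hY.eq, hv, hYv, vecMulVec_smul, smul_smul]
  rw [jmul, hYW, hWY]
  rcases eq_or_ne b 0 with rfl | hb
  · have hv0 : v = 0 := by
      rw [← dotProduct_self_eq_zero, dotProduct_self_eq_mul hY hv hYv, zero_mul]
    simp [hv0]
  · rw [inv_mul_cancel₀ hb, one_smul, one_smul, sub_add_sub_comm, add_comm, sub_self, smul_zero]

lemma minner_jmul_phiWitness (hΛu : Λ *ᵥ u = a • u) (hΛv : Λ *ᵥ v = -a • v)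
    (huv : u ⬝ᵥ v = 0) :
    minner (jmul (phiWitness u v b) (phiWitness u v b)) Λ
      = a * ((u ⬝ᵥ u) ^ 2 - (b⁻¹ * (v ⬝ᵥ v)) ^ 2) := by
  have hWW : phiWitness u v b * phiWitness u v b =
      (u ⬝ᵥ u) • vecMulVec u u + (b⁻¹ ^ 2 * (v ⬝ᵥ v)) • vecMulVec v v := by
    simp only [phiWitness, sub_mul, mul_sub, Matrix.smul_mul, Matrix.mul_smul,
      vecMulVec_mul_vecMulVec, huv, dotProduct_comm v u, zero_smul, vecMulVec_zero, smul_zero,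
      vecMulVec_smul, smul_smul]
    module
  rw [minner, jmul_self, hWW, trace_mul_comm, Matrix.mul_add, Matrix.mul_smul, Matrix.mul_smul,
    mul_vecMulVec, mul_vecMulVec, hΛu, hΛv, trace_add, trace_smul, trace_smul, trace_vecMulVec,
    trace_vecMulVec, smul_dotProduct, smul_dotProduct]
  simp only [smul_eq_mul]
  ring

lemma not_memPhi_of_anticomm (hΛ : Λ.IsSymm) (hY : Y.IsSymm) (hanti : Λ * Y = -(Y * Λ))
    (hu : u ≠ 0) (ha : a < 0) (hΛu : Λ *ᵥ u = a • u) (hYYu : (Y * Y) *ᵥ u = b • u) :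
    ¬ memPhi Λ Y := by
  set v := Y *ᵥ u with hv
  have hYv : Y *ᵥ v = b • u := by rw [hv, mulVec_mulVec, hYYu]
  have hΛv := mulVec_eq_neg_smul_of_anticomm hanti hΛu hv.symm
  have huv : u ⬝ᵥ v = 0 := hΛ.dotProduct_eq_zero_of_mulVec_eq_smul hΛu hΛv (by linarith)
  intro hPhi
  have hpos := hPhi _ (phiWitness_isSymm u v b) (phiWitness_ne_zero hu huv)
    (jmul_phiWitness_eq_zero hY hv.symm hYv)
  rw [minner_jmul_phiWitness hΛu hΛv huv, dotProduct_self_eq_mul hY hv.symm hYv,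
    ← mul_assoc] at hpos
  have hsq : (b⁻¹ * b * (u ⬝ᵥ u)) ^ 2 ≤ (u ⬝ᵥ u) ^ 2 := by
    rcases eq_or_ne b 0 with rfl | hb
    · simp [sq_nonneg]
    · rw [inv_mul_cancel₀ hb, one_mul]
  nlinarith

end Witness

theorem stmt0 {m : ℕ} (Λ Y : Matrix (Fin m) (Fin m) ℝ)
    (hΛ : Λ.IsSymm) (hY : Y.IsSymm)
    (hYΛ : jmul Y Λ = 0) (hPhi : memPhi Λ Y) :
    Λ.PosSemidef := by
  have hanti : Λ * Y = -(Y * Λ) := mul_eq_neg_mul_of_jmul_eq_zero hYΛ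
  by_contra hΛpsd
  obtain ⟨a, x, ha, hx, hΛx⟩ :=
    (isHermitian_iff_isSymm.mpr hΛ).exists_neg_eigenvector_of_not_posSemidef hΛpsd
  have hYY : (Y * Y).IsHermitian := by
    simpa [hY.eq] using isHermitian_iff_isSymm.mpr (isSymm_transpose_mul_self Y)
  obtain ⟨b, u, hu, hΛu, hYYu⟩ :=
    hYY.exists_common_eigenvector (Commute.mul_self_of_mul_eq_neg_mul hanti) hx hΛx
  exact not_memPhi_of_anticomm hΛ hY hanti hu ha hΛu hYYu hPhi
end
end

section
/- Let Λ, Y ∈ S^m be real symmetric m×m matrices such that Y∘Λ = 0 and Y ∈ Φ(Λ), i.e., ⟨W∘W, Λ⟩ > 0 for every nonzero W ∈ S^m with Y∘W = 0. Then for any two nonzero eigenvalues σ and σ' of Y (counted via the spectral theorem for real symmetric matrices), one has σ + σ' ≠ 0. -/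
open Matrix

noncomputable section

namespace AuxStmt2
variable {m : ℕ}

lemma mulvmv (Y : Matrix (Fin m) (Fin m) ℝ) (u v : Fin m → ℝ) :
    Y * vecMulVec u v = vecMulVec (Y *ᵥ u) v := by
  ext a b
  simp only [Matrix.mul_apply, vecMulVec_apply, mulVec, dotProduct, Finset.sum_mul]
  exact Finset.sum_congr rfl fun k _ => by ring

lemma vmvmul (Y : Matrix (Fin m) (Fin m) ℝ) (u v : Fin m → ℝ) :
    vecMulVec u v * Y = vecMulVec u (Yᵀ *ᵥ v) := by
  ext a b
  simp only [Matrix.mul_apply, vecMulVec_apply, mulVec, dotProduct, transpose_apply,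
    Finset.mul_sum]
  exact Finset.sum_congr rfl fun k _ => by ring

lemma vmv_smul_left (c : ℝ) (u v : Fin m → ℝ) :
    vecMulVec (c • u) v = c • vecMulVec u v := by
  ext a b; simp [vecMulVec_apply]; ring

lemma vmv_smul_right (c : ℝ) (u v : Fin m → ℝ) :
    vecMulVec u (c • v) = c • vecMulVec u v := by
  ext a b; simp [vecMulVec_apply]; ring

lemma vmv_mulVec (u v w : Fin m → ℝ) :
    vecMulVec u v *ᵥ w = (v ⬝ᵥ w) • u := by
  ext a
  simp only [mulVec, dotProduct, vecMulVec_apply, Pi.smul_apply, smul_eq_mul, Finset.sum_mul]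
  exact Finset.sum_congr rfl fun k _ => by ring

lemma vmv_transpose (u v : Fin m → ℝ) :
    (vecMulVec u v)ᵀ = vecMulVec v u := by
  ext a b; simp [vecMulVec_apply, mul_comm]

lemma vmv_mul_vmv (a b c d : Fin m → ℝ) :
    vecMulVec a b * vecMulVec c d = (c ⬝ᵥ b) • vecMulVec a d := by
  rw [vmvmul, vmv_transpose, vmv_mulVec, vmv_smul_right]

lemma trace_vmv_mul (u v : Fin m → ℝ) (M : Matrix (Fin m) (Fin m) ℝ) :
    (vecMulVec u v * M).trace = v ⬝ᵥ (M *ᵥ u) := by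
  simp only [Matrix.trace, Matrix.diag, Matrix.mul_apply, vecMulVec_apply, dotProduct, mulVec]
  rw [Finset.sum_comm]
  refine Finset.sum_congr rfl fun k _ => ?_
  simp only [dotProduct, Finset.mul_sum]
  exact Finset.sum_congr rfl fun a _ => by ring

end AuxStmt2

theorem stmt2 {m : ℕ} (Λ Y : Matrix (Fin m) (Fin m) ℝ)
    (hΛ : Λ.IsSymm) (hY : Y.IsSymm)
    (hYΛ : jmul Y Λ = 0) (hPhi : memPhi Λ Y) :
    ∀ (hY' : Y.IsHermitian) (i j : Fin m),
      hY'.eigenvalues i ≠ 0 → hY'.eigenvalues j ≠ 0 →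
      hY'.eigenvalues i + hY'.eigenvalues j ≠ 0 := by
  intro hY' i j hi hj hsum
  set σ : ℝ := hY'.eigenvalues i with hσ
  set τ : ℝ := hY'.eigenvalues j with hτ
  have hij : i ≠ j := by
    rintro rfl
    apply hi; linarith
  set u : Fin m → ℝ := ⇑(hY'.eigenvectorBasis i) with hu
  set v : Fin m → ℝ := ⇑(hY'.eigenvectorBasis j) with hv
  have hYu : Y *ᵥ u = σ • u := hY'.mulVec_eigenvectorBasis i
  have hYv : Y *ᵥ v = τ • v := hY'.mulVec_eigenvectorBasis j
  have hdot : ∀ a b : Fin m,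
      (⇑(hY'.eigenvectorBasis a) : Fin m → ℝ) ⬝ᵥ ⇑(hY'.eigenvectorBasis b)
        = if a = b then 1 else 0 := by
    intro a b
    have h := orthonormal_iff_ite.mp hY'.eigenvectorBasis.orthonormal a b
    simpa [PiLp.inner_apply, dotProduct, RCLike.inner_apply, mul_comm] using h
  have huu : u ⬝ᵥ u = 1 := by simpa using hdot i i
  have hvv : v ⬝ᵥ v = 1 := by simpa using hdot j j
  have huv : u ⬝ᵥ v = 0 := by simpa [hij] using hdot i j
  have hvu : v ⬝ᵥ u = 0 := by simpa [Ne.symm hij] using hdot j i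
  set W : Matrix (Fin m) (Fin m) ℝ := vecMulVec u v + vecMulVec v u with hW
  have hWsymm : W.IsSymm := by
    unfold Matrix.IsSymm
    rw [hW, transpose_add, AuxStmt2.vmv_transpose, AuxStmt2.vmv_transpose, add_comm]
  have hWv : W *ᵥ v = u := by
    rw [hW, add_mulVec, AuxStmt2.vmv_mulVec, AuxStmt2.vmv_mulVec, hvv, huv]
    simp
  have hWne : W ≠ 0 := by
    intro h0
    have h1 : u ⬝ᵥ (W *ᵥ v) = 0 := by rw [h0]; simp
    rw [hWv, huu] at h1
    norm_num at h1
  have hYW : jmul Y W = 0 := by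
    have hYt : Yᵀ = Y := hY
    have h1 : Y * W = σ • vecMulVec u v + τ • vecMulVec v u := by
      rw [hW, mul_add, AuxStmt2.mulvmv, AuxStmt2.mulvmv, hYu, hYv,
        AuxStmt2.vmv_smul_left, AuxStmt2.vmv_smul_left]
    have h2 : W * Y = τ • vecMulVec u v + σ • vecMulVec v u := by
      rw [hW, add_mul, AuxStmt2.vmvmul, AuxStmt2.vmvmul, hYt, hYu, hYv,
        AuxStmt2.vmv_smul_right, AuxStmt2.vmv_smul_right]
    have hτσ : τ = -σ := by linarith
    unfold jmul
    rw [h1, h2, hτσ]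
    module
  have hWW : jmul W W = vecMulVec u u + vecMulVec v v := by
    have hsq : W * W = vecMulVec u u + vecMulVec v v := by
      rw [hW, mul_add, add_mul, add_mul, AuxStmt2.vmv_mul_vmv, AuxStmt2.vmv_mul_vmv,
        AuxStmt2.vmv_mul_vmv, AuxStmt2.vmv_mul_vmv, huu, hvv, huv, hvu]
      module
    unfold jmul
    rw [hsq]
    module
  have hmin : minner (jmul W W) Λ = u ⬝ᵥ (Λ *ᵥ u) + v ⬝ᵥ (Λ *ᵥ v) := by
    rw [hWW]
    unfold minner
    rw [add_mul, trace_add, AuxStmt2.trace_vmv_mul, AuxStmt2.trace_vmv_mul]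
  have hz : Y * Λ + Λ * Y = 0 := by
    have h := hYΛ
    unfold jmul at h
    rcases smul_eq_zero.mp h with h' | h'
    · norm_num at h'
    · exact h'
  have key : ∀ (w : Fin m → ℝ) (c : ℝ), c ≠ 0 → Y *ᵥ w = c • w →
      w ⬝ᵥ (Λ *ᵥ w) = 0 := by
    intro w c hc hw
    have h0 : w ⬝ᵥ ((Y * Λ + Λ * Y) *ᵥ w) = 0 := by rw [hz]; simp
    rw [add_mulVec, dotProduct_add, ← mulVec_mulVec, ← mulVec_mulVec] at h0
    have e1 : w ⬝ᵥ (Y *ᵥ (Λ *ᵥ w)) = c * (w ⬝ᵥ (Λ *ᵥ w)) := by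
      rw [dotProduct_mulVec]
      have hwY : w ᵥ* Y = c • w := by
        rw [← Matrix.mulVec_transpose, hY, hw]
      rw [hwY, smul_dotProduct, smul_eq_mul]
    have e2 : w ⬝ᵥ (Λ *ᵥ (Y *ᵥ w)) = c * (w ⬝ᵥ (Λ *ᵥ w)) := by
      rw [hw, mulVec_smul, dotProduct_smul, smul_eq_mul]
    rw [e1, e2] at h0
    have h2c : (2 * c) * (w ⬝ᵥ (Λ *ᵥ w)) = 0 := by linarith
    rcases mul_eq_zero.mp h2c with h' | h'
    · exact absurd h' (by positivity)
    · exact h'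
  have hu0 : u ⬝ᵥ (Λ *ᵥ u) = 0 := key u σ hi hYu
  have hv0 : v ⬝ᵥ (Λ *ᵥ v) = 0 := key v τ hj hYv
  have hpos := hPhi W hWsymm hWne hYW
  rw [hmin, hu0, hv0] at hpos
  norm_num at hpos
end
end

section
/- Let Λ ∈ S^m be positive semidefinite. Then there exists Y ∈ S^m (which may be chosen positive semidefinite) such that Y∘Λ = 0 and Y ∈ Φ(Λ), i.e., ⟨W∘W, Λ⟩ > 0 for every nonzero W ∈ S^m with Y∘W = 0. -/
open Matrix

noncomputable section

/-!
Take `Y` to be the orthogonal projection onto `ker Λ`, so that `YΛ = ΛY = 0` and `Λ + Y` is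
invertible. If `Y ∘ W = 0`, multiplying `YW = -WY` by the idempotent `Y` on either side gives
`YW = WY`, hence `YW = 0`. Moreover `⟨W ∘ W, Λ⟩ = tr (W Λ W) ≥ 0`, with equality only if `ΛW = 0`;
then `(Λ + Y) W = 0`, so `W = 0`.
-/

open scoped MatrixOrder ComplexOrder

theorem IsIdempotentElem.mul_eq_zero_of_mul_add_mul_eq_zero {R : Type*} [Ring R]
    [IsAddTorsionFree R] {p x : R} (hp : IsIdempotentElem p) (h : p * x + x * p = 0) :
    p * x = 0 := by
  have anti : p * x = -(x * p) := eq_neg_of_add_eq_zero_left h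
  have comm : p * x = x * p :=
    calc p * x = p * (p * x) := by rw [← mul_assoc, hp.eq]
      _ = -((p * x) * p) := by rw [anti, mul_neg, ← mul_assoc, ← anti]
      _ = x * p := by rw [anti, neg_mul, neg_neg, mul_assoc, hp.eq]
  exact self_eq_neg.mp (anti.trans (by rw [comm]))

namespace Matrix

variable {n k 𝕜 : Type*} [Fintype n] [Fintype k] [RCLike 𝕜]

theorem PosSemidef.trace_conjTranspose_mul_mul_eq_zero_iff {A : Matrix n n 𝕜}
    (hA : A.PosSemidef) (W : Matrix n k 𝕜) : (Wᴴ * A * W).trace = 0 ↔ A * W = 0 := by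
  classical
  refine ⟨fun h ↦ ?_, fun h ↦ by rw [Matrix.mul_assoc, h, Matrix.mul_zero, trace_zero]⟩
  obtain ⟨B, rfl⟩ := CStarAlgebra.nonneg_iff_eq_star_mul_self.mp hA.nonneg
  rw [star_eq_conjTranspose] at h ⊢
  have hBW : B * W = 0 := by
    rw [← trace_conjTranspose_mul_self_eq_zero_iff, conjTranspose_mul]
    simpa only [Matrix.mul_assoc] using h
  rw [Matrix.mul_assoc, hBW, Matrix.mul_zero]

variable [DecidableEq n]

/-- The orthogonal projection onto `ker A` when `A` is Hermitian (`cfc` returns `0` otherwise). -/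
def kernelProjection (A : Matrix n n 𝕜) : Matrix n n 𝕜 :=
  cfc (fun x : ℝ ↦ if x = 0 then 1 else 0) A

variable (A : Matrix n n 𝕜)

theorem posSemidef_kernelProjection : A.kernelProjection.PosSemidef := by
  unfold kernelProjection
  exact (cfc_nonneg fun x _ ↦ by split_ifs <;> norm_num).posSemidef

theorem continuousOn_spectrum_real (f : ℝ → ℝ) : ContinuousOn f (spectrum ℝ A) :=
  A.finite_real_spectrum.continuousOn f

theorem isIdempotentElem_kernelProjection : IsIdempotentElem A.kernelProjection := by
  rw [IsIdempotentElem, kernelProjection, ← cfc_mul _ _ A (A.continuousOn_spectrum_real _)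
    (A.continuousOn_spectrum_real _)]
  congr 1
  ext x
  split_ifs <;> norm_num

variable {A}

theorem kernelProjection_mul_self (hA : A.IsHermitian) : A.kernelProjection * A = 0 := by
  have hcont := A.continuousOn_spectrum_real
  calc A.kernelProjection * A = cfc (fun x : ℝ ↦ (if x = 0 then 1 else 0) * x) A := by
        rw [cfc_mul _ _ A (hcont _) (hcont _), cfc_id' ℝ A hA.isSelfAdjoint, kernelProjection]
    _ = 0 := by
        rw [← cfc_const_zero ℝ A]
        congr 1
        ext x
        split_ifs with hx <;> simp [hx]

theorem mul_kernelProjection (hA : A.IsHermitian) : A * A.kernelProjection = 0 := by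
  simpa [hA.eq, (posSemidef_kernelProjection A).isHermitian.eq] using
    congrArg conjTranspose (kernelProjection_mul_self hA)

theorem isUnit_add_kernelProjection (hA : A.IsHermitian) : IsUnit (A + A.kernelProjection) := by
  have hcont := A.continuousOn_spectrum_real
  have : A + A.kernelProjection = cfc (fun x : ℝ ↦ x + if x = 0 then 1 else 0) A := by
    rw [cfc_add A _ _ (hcont _) (hcont _), cfc_id' ℝ A hA.isSelfAdjoint, kernelProjection]
  rw [this, isUnit_cfc_iff _ A (hcont _) hA.isSelfAdjoint]
  intro x _
  split_ifs with hx <;> simp [hx]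

end Matrix

theorem jmul_eq_zero_iff {m : ℕ} {A B : Matrix (Fin m) (Fin m) ℝ} :
    jmul A B = 0 ↔ A * B + B * A = 0 := by
  rw [jmul, smul_eq_zero, or_iff_right (by norm_num)]

theorem minner_jmul_self {m : ℕ} (W Λ : Matrix (Fin m) (Fin m) ℝ) :
    minner (jmul W W) Λ = (W * Λ * W).trace := by
  rw [minner, jmul, ← two_smul ℝ (W * W), smul_smul, one_div, inv_mul_cancel₀ two_ne_zero,
    one_smul, Matrix.mul_assoc, trace_mul_comm, Matrix.mul_assoc]

theorem memPhi_of_isIdempotentElem {m : ℕ} {Λ P : Matrix (Fin m) (Fin m) ℝ}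
    (hΛ : Λ.PosSemidef) (hP : IsIdempotentElem P) (hΛP : IsUnit (Λ + P)) : memPhi Λ P := by
  have := IsAddTorsionFree.of_module_rat (Matrix (Fin m) (Fin m) ℝ)
  intro W hW hW0 hPW
  have hPW' : P * W = 0 := hP.mul_eq_zero_of_mul_add_mul_eq_zero (jmul_eq_zero_iff.mp hPW)
  have hWW : Wᴴ = W := by rw [conjTranspose_eq_transpose_of_trivial, hW.eq]
  have hnonneg : 0 ≤ (W * Λ * W).trace := by
    simpa only [hWW] using (hΛ.conjTranspose_mul_mul_same W).trace_nonneg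
  rw [minner_jmul_self]
  refine hnonneg.lt_of_ne fun h ↦ hW0 ?_
  have hΛW : Λ * W = 0 := (hΛ.trace_conjTranspose_mul_mul_eq_zero_iff W).mp (by rw [hWW, h])
  exact hΛP.mul_right_eq_zero.mp (by rw [add_mul, hΛW, hPW', add_zero])

theorem stmt3 {m : ℕ} (Λ : Matrix (Fin m) (Fin m) ℝ) (hΛ : Λ.PosSemidef) :
    ∃ Y : Matrix (Fin m) (Fin m) ℝ, Y.PosSemidef ∧ jmul Y Λ = 0 ∧ memPhi Λ Y := by
  refine ⟨Λ.kernelProjection, Λ.posSemidef_kernelProjection, ?_,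
    memPhi_of_isIdempotentElem hΛ Λ.isIdempotentElem_kernelProjection
      (isUnit_add_kernelProjection hΛ.isHermitian)⟩
  rw [jmul_eq_zero_iff, kernelProjection_mul_self hΛ.isHermitian,
    mul_kernelProjection hΛ.isHermitian, add_zero]
end
end

section
/- Let G : ℝⁿ → S^m be twice continuously differentiable with G(x) positive semidefinite. If nondegeneracy holds at x for (P1) and Y = √G(x) is the PSD square root of G(x), then LICQ holds at (x,Y) for (P2): the only W ∈ S^m with Y∘W = 0 and DG(x)*W = 0 is W = 0. -/
open Matrix

noncomputable section

def Matrix.PosSemidef.sqrt {m : ℕ} {A : Matrix (Fin m) (Fin m) ℝ} (hA : A.PosSemidef) :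
    Matrix (Fin m) (Fin m) ℝ :=
  hA.1.eigenvectorUnitary.1 * diagonal ((↑) ∘ (√·) ∘ hA.1.eigenvalues) *
  (star hA.1.eigenvectorUnitary : Matrix (Fin m) (Fin m) ℝ)

/-! Write `Y = √G(x)`. Anticommutation `YW = -WY` makes `W` commute with `Y² = G(x)`, hence with
`Y`, which is a continuous function of `G(x)`. So `YW = 0`, thus `G(x) W = Y (Y W) = 0`, and
nondegeneracy forces `W = 0`. -/

lemma Matrix.PosSemidef.sqrt_eq_cfc {m : ℕ} {A : Matrix (Fin m) (Fin m) ℝ} (hA : A.PosSemidef) :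
    hA.sqrt = cfc Real.sqrt A := by
  rw [hA.1.cfc_eq, IsHermitian.cfc, Unitary.conjStarAlgAut_apply]
  rfl

lemma Matrix.PosSemidef.sqrt_mul_self {m : ℕ} {A : Matrix (Fin m) (Fin m) ℝ}
    (hA : A.PosSemidef) : hA.sqrt * hA.sqrt = A := by
  rw [hA.sqrt_eq_cfc, ← cfc_mul Real.sqrt Real.sqrt A]
  conv_rhs => rw [← cfc_id' ℝ A hA.1.isSelfAdjoint]
  refine cfc_congr fun t ht => ?_
  rw [hA.1.spectrum_real_eq_range_eigenvalues] at ht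
  obtain ⟨i, rfl⟩ := ht
  exact Real.mul_self_sqrt (hA.eigenvalues_nonneg i)

lemma commute_mul_self_of_mul_add_mul_eq_zero {R : Type*} [Ring R] {a b : R}
    (h : a * b + b * a = 0) : Commute (a * a) b := by
  have hab : a * b = -(b * a) := eq_neg_of_add_eq_zero_left h
  show a * a * b = b * (a * a)
  calc a * a * b = a * (a * b) := mul_assoc a a b
    _ = b * (a * a) := by rw [hab, mul_neg, ← mul_assoc, hab, neg_mul, neg_neg, mul_assoc]

lemma Matrix.PosSemidef.mul_eq_zero_of_jmul_sqrt_eq_zero {m : ℕ} {A W : Matrix (Fin m) (Fin m) ℝ}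
    (hA : A.PosSemidef) (h : jmul hA.sqrt W = 0) : A * W = 0 := by
  have hanti : hA.sqrt * W + W * hA.sqrt = 0 :=
    (smul_eq_zero.mp h).resolve_left (by norm_num)
  have hcomm : Commute hA.sqrt W := by
    rw [hA.sqrt_eq_cfc]
    refine Commute.cfc_real ?_ _
    rw [← hA.sqrt_mul_self]
    exact commute_mul_self_of_mul_add_mul_eq_zero hanti
  have hYW : hA.sqrt * W = 0 := by
    rw [← hcomm.eq] at hanti
    simpa [← two_smul ℝ] using hanti
  rw [← hA.sqrt_mul_self, Matrix.mul_assoc, hYW, Matrix.mul_zero]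

theorem stmt13_general {n m : ℕ} (G : (Fin n → ℝ) → Matrix (Fin m) (Fin m) ℝ)
    (x : Fin n → ℝ) (hGx : (G x).PosSemidef)
    (hnd : Nondeg G x) :
    LICQ G x hGx.sqrt :=
  fun W hW hYW hadj => hnd W hW (hGx.mul_eq_zero_of_jmul_sqrt_eq_zero hYW) hadj

theorem stmt13 {n m : ℕ} (G : (Fin n → ℝ) → Matrix (Fin m) (Fin m) ℝ)
    (hG : ∀ i j, ContDiff ℝ 2 fun y => G y i j) (x : Fin n → ℝ) (hGx : (G x).PosSemidef)
    (hnd : Nondeg G x) :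
    LICQ G x hGx.sqrt :=
  stmt13_general G x hGx hnd
end
end
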